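/- arXiv:1401.2419 — 2 statements merged into one kernel-verified Lean document; each statement's English description precedes it below -/
import Mathlib

section
/- Let d ≥ 2 be an integer and r > 0, t > 0. Then for every w ∈ ℂ with |w| ≥ ρ: if Im w > 0 then Im ψ(w) > 0, and if Im w < 0 then Im ψ(w) < 0. -/
open Complex

/-!
Writing `w⁻ᵈ = w̄ᵈ / ‖w‖²ᵈ` gives `Im ψ(w) = r Im w - t rᵈ Im(wᵈ) / ‖w‖²ᵈ`. Off the real axis
`|Im wᵈ| < d ‖w‖ᵈ⁻¹ |Im w|`, so the second term is smaller than `(d t rᵈ⁻¹ / ‖w‖ᵈ⁺¹) · r |Im w|`,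
and that factor is at most `1` exactly when `‖w‖ ≥ ρ`. Hence `Im ψ(w)` has the sign
of `Im w`.
-/

noncomputable def psi (d : ℕ) (r t : ℝ) (w : ℂ) : ℂ :=
  (r : ℂ) * w + (t : ℂ) * (r : ℂ) ^ d / w ^ d

noncomputable def rho (d : ℕ) (r t : ℝ) : ℝ :=
  ((d : ℝ) * t * r ^ (d - 1)) ^ ((1 : ℝ) / ((d : ℝ) + 1))

namespace Complex

theorem abs_im_pow_succ_le (z : ℂ) (n : ℕ) :
    |(z ^ (n + 1)).im| ≤ ‖z‖ ^ n * |z.im| + |(z ^ n).im| * |z.re| := by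
  rw [pow_succ, mul_im, ← abs_mul]
  refine (abs_add_le _ _).trans ?_
  gcongr
  rw [abs_mul, ← norm_pow]
  gcongr
  exact abs_re_le_norm _

-- Strictness comes from `|Re z| < ‖z‖`, which already enters the estimate for `z²`.
theorem abs_im_pow_lt {z : ℂ} (hz : z.im ≠ 0) (n : ℕ) :
    |(z ^ (n + 2)).im| < (n + 2) * ‖z‖ ^ (n + 1) * |z.im| := by
  have hy : 0 < |z.im| := abs_pos.mpr hz
  have hx : |z.re| < ‖z‖ := abs_re_lt_norm.mpr hz
  induction n with
  | zero =>
    calc |(z ^ 2).im| ≤ ‖z‖ * |z.im| + |z.im| * |z.re| := by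
          simpa using abs_im_pow_succ_le z 1
      _ < ‖z‖ * |z.im| + |z.im| * ‖z‖ := by gcongr
      _ = _ := by ring
  | succ n ih =>
    calc |(z ^ (n + 3)).im| ≤ ‖z‖ ^ (n + 2) * |z.im| + |(z ^ (n + 2)).im| * |z.re| :=
          abs_im_pow_succ_le z (n + 2)
      _ ≤ ‖z‖ ^ (n + 2) * |z.im| + |(z ^ (n + 2)).im| * ‖z‖ := by gcongr
      _ < ‖z‖ ^ (n + 2) * |z.im| + (n + 2) * ‖z‖ ^ (n + 1) * |z.im| * ‖z‖ := by
          gcongr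
          exact norm_pos_iff.mpr fun h => hz (by simp [h])
      _ = (↑(n + 1) + 2) * ‖z‖ ^ (n + 1 + 1) * |z.im| := by push_cast; ring

end Complex

theorem psi_im (d : ℕ) (r t : ℝ) (w : ℂ) :
    (psi d r t w).im = r * w.im - t * r ^ d * (w ^ d).im / ‖w‖ ^ (2 * d) := by
  have hnormSq : normSq (w ^ d) = ‖w‖ ^ (2 * d) := by
    rw [← Complex.sq_norm, norm_pow, ← pow_mul, mul_comm]
  simp only [psi, add_im, div_im, hnormSq, mul_im, mul_re, ofReal_re, ofReal_im, ← ofReal_pow]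
  ring

theorem rho_pow_succ (d : ℕ) {r t : ℝ} (hr : 0 ≤ r) (ht : 0 ≤ t) :
    rho d r t ^ (d + 1) = d * t * r ^ (d - 1) := by
  have h := Real.rpow_inv_natCast_pow (x := d * t * r ^ (d - 1)) (by positivity) d.succ_ne_zero
  rwa [Nat.cast_succ, ← one_div] at h

theorem abs_im_psi_sub_lt {d : ℕ} (hd : 2 ≤ d) {r t : ℝ} (hr : 0 < r) (ht : 0 < t) {w : ℂ}
    (hw : rho d r t ≤ ‖w‖) (hy : w.im ≠ 0) :
    |(psi d r t w).im - r * w.im| < r * |w.im| := by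
  obtain ⟨n, rfl⟩ : ∃ n, d = n + 2 := ⟨d - 2, by omega⟩
  have hw0 : 0 < ‖w‖ := norm_pos_iff.mpr fun h => hy (by simp [h])
  have hrho : (n + 2 : ℕ) * t * r ^ (n + 1) ≤ ‖w‖ ^ (n + 3) := by
    have h := rho_pow_succ (n + 2) hr.le ht.le
    rw [show n + 2 - 1 = n + 1 by omega] at h
    rw [← h]
    exact pow_le_pow_left₀ (by unfold rho; positivity) hw _
  push_cast at hrho
  rw [psi_im, sub_sub_cancel_left, abs_neg, abs_div, abs_mul, abs_mul, abs_of_pos ht,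
    abs_of_pos (pow_pos hr _), abs_of_pos (pow_pos hw0 _), div_lt_iff₀ (pow_pos hw0 _)]
  calc t * r ^ (n + 2) * |(w ^ (n + 2)).im|
      < t * r ^ (n + 2) * ((n + 2) * ‖w‖ ^ (n + 1) * |w.im|) := by
        gcongr; exact Complex.abs_im_pow_lt hy n
    _ = ((n + 2) * t * r ^ (n + 1)) * (r * |w.im| * ‖w‖ ^ (n + 1)) := by ring
    _ ≤ ‖w‖ ^ (n + 3) * (r * |w.im| * ‖w‖ ^ (n + 1)) := by gcongr
    _ = r * |w.im| * ‖w‖ ^ (2 * (n + 2)) := by ring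

/-- For `|w| ≥ ρ`, `ψ` maps the open upper (resp. lower) half plane into itself. -/
theorem stmt4 (d : ℕ) (hd : 2 ≤ d) (r t : ℝ) (hr : 0 < r) (ht : 0 < t)
    (w : ℂ) (hw : rho d r t ≤ ‖w‖) :
    (0 < w.im → 0 < (psi d r t w).im) ∧ (w.im < 0 → (psi d r t w).im < 0) := by
  constructor
  · intro hy
    have h := abs_im_psi_sub_lt hd hr ht hw hy.ne'
    rw [abs_of_pos hy, abs_sub_lt_iff] at h
    linarith
  · intro hy
    have h := abs_im_psi_sub_lt hd hr ht hw hy.ne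
    rw [abs_of_neg hy, abs_sub_lt_iff] at h
    linarith
end

section
/- Let d ≥ 2 be an integer, t > 0, and 0 < r < r_crit = (d·t)^{−1/(d−1)}. Set x* = (d+1)·d^{−d/(d+1)}·t^{1/(d+1)}·r^{2d/(d+1)}. Then for every w ∈ ℂ with |w| > ρ, the point ψ(w) does not lie on the (d+1)-star Σ₁* = {z ∈ ℂ : z^{d+1} is a real number with 0 ≤ z^{d+1} ≤ (x*)^{d+1}}; equivalently, ψ(w)^{d+1} is not a real number in the interval [0, (x*)^{d+1}]. -/
open Complex

/-- `x* = (d+1)·d^{-d/(d+1)}·t^{1/(d+1)}·r^{2d/(d+1)}`. -/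
noncomputable def xstar (d : ℕ) (r t : ℝ) : ℝ :=
  ((d : ℝ) + 1) * (d : ℝ) ^ (-(d : ℝ) / ((d : ℝ) + 1)) * t ^ ((1 : ℝ) / ((d : ℝ) + 1))
    * r ^ (2 * (d : ℝ) / ((d : ℝ) + 1))

/-!
Multiplying `w` by a `(d+1)`-st root of unity `ζ` multiplies `ψ(w)` by `ζ` (because
`ζ^{-d} = ζ`), so if `ψ(w)^{d+1} = s ≥ 0` we may rotate `w` until `ψ(w) = s^{1/(d+1)}` is real
and nonnegative. The condition `|w| > ρ` reads `d t r^d < r |w|^{d+1}`. Together with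
`|Im (u^d)| ≤ d |u|^{d-1} |Im u|` it forces a point with real `ψ(u)` onto the real axis. There
`ψ` is negative on the negative half-line, while on the positive half-line strict AM–GM applied
to `d` copies of `r a / d` and one copy of `t r^d / a^d` gives `ψ(a) > x*` for `a ≠ ρ`.
-/

theorem Complex.abs_im_pow_mul_norm_le (z : ℂ) (n : ℕ) :
    |(z ^ n).im| * ‖z‖ ≤ n * ‖z‖ ^ n * |z.im| := by
  induction n with
  | zero => simp
  | succ n ih =>
    have hre : |(z ^ n).re| ≤ ‖z‖ ^ n := by
      simpa only [norm_pow] using abs_re_le_norm (z ^ n)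
    calc |(z ^ (n + 1)).im| * ‖z‖
        ≤ (|(z ^ n).re| * |z.im| + |(z ^ n).im| * |z.re|) * ‖z‖ := by
          rw [pow_succ, mul_im, ← abs_mul, ← abs_mul]
          gcongr
          exact abs_add_le _ _
      _ ≤ (‖z‖ ^ n * |z.im| + |(z ^ n).im| * ‖z‖) * ‖z‖ := by
          gcongr
          exact abs_re_le_norm z
      _ ≤ (‖z‖ ^ n * |z.im| + n * ‖z‖ ^ n * |z.im|) * ‖z‖ := by gcongr
      _ = (n + 1 : ℕ) * ‖z‖ ^ (n + 1) * |z.im| := by push_cast; ring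

/-- Strict AM–GM for `n` copies of `p` and one copy of `q`, via Bernoulli's inequality. -/
theorem pow_mul_lt_add_pow {n : ℕ} (hn : 0 < n) {p q : ℝ} (hp : 0 < p) (hq : 0 ≤ q)
    (hpq : p ≠ q) : ((n : ℝ) + 1) ^ (n + 1) * p ^ n * q < (n * p + q) ^ (n + 1) := by
  set s := (q - p) / ((n + 1) * p) with hs
  have hs_ge : -1 ≤ s := by
    rw [hs, le_div_iff₀ (by positivity)]
    nlinarith [(Nat.cast_nonneg n : (0 : ℝ) ≤ n)]
  have hs_ne : s ≠ 0 := div_ne_zero (sub_ne_zero.mpr hpq.symm) (by positivity)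
  have bernoulli : 1 + (n + 1) * s < (1 + s) ^ (n + 1) := by
    have := one_add_mul_self_lt_rpow_one_add hs_ge hs_ne (p := (n + 1 : ℕ)) (by simpa using hn)
    rwa [Real.rpow_natCast, Nat.cast_succ] at this
  calc ((n : ℝ) + 1) ^ (n + 1) * p ^ n * q
      = ((n + 1) * p) ^ (n + 1) * (1 + (n + 1) * s) := by
        rw [show 1 + (n + 1) * s = q / p by rw [hs]; field_simp; ring, mul_pow, pow_succ p]
        field_simp
    _ < ((n + 1) * p) ^ (n + 1) * (1 + s) ^ (n + 1) := by gcongr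
    _ = (n * p + q) ^ (n + 1) := by
        rw [← mul_pow, hs]; congr 1; field_simp; ring

theorem Complex.exists_pow_eq_one_of_pow_eq_ofReal {z : ℂ} {n : ℕ} {s : ℝ} (hs : 0 ≤ s)
    (h : z ^ n = s) : ∃ ζ : ℂ, ζ ^ n = 1 ∧ z = ζ * ‖z‖ := by
  rcases eq_or_ne z 0 with rfl | hz
  · exact ⟨1, one_pow n, by simp⟩
  have hnorm : (‖z‖ : ℂ) ^ n = s := by
    rw [← ofReal_pow, ← norm_pow, h, norm_real, Real.norm_of_nonneg hs]
  have hnorm0 : (‖z‖ : ℂ) ≠ 0 := ofReal_ne_zero.mpr (norm_ne_zero_iff.mpr hz)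
  refine ⟨z / ‖z‖, ?_, (div_mul_cancel₀ z hnorm0).symm⟩
  rw [div_pow, h, ← hnorm, div_self (pow_ne_zero n hnorm0)]

section

variable {d : ℕ} {r t : ℝ}

theorem psi_mul_of_pow_eq_one {ζ : ℂ} (hζ : ζ ^ (d + 1) = 1) (u : ℂ) :
    psi d r t (ζ * u) = ζ * psi d r t u := by
  have hζ0 : ζ ≠ 0 := by rintro rfl; simp at hζ
  rcases eq_or_ne u 0 with rfl | hu
  · rcases d with _ | d <;> simp_all [psi]
  rw [psi, psi, mul_pow]
  field_simp
  linear_combination -(t : ℂ) * r ^ d * hζ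

theorem psi_ofReal (a : ℝ) : psi d r t a = ((r * a + t * r ^ d / a ^ d : ℝ) : ℂ) := by
  push_cast; rfl

theorem im_eq_zero_of_im_psi_eq_zero (hr : 0 < r) (ht : 0 ≤ t) {u : ℂ}
    (hu : d * t * r ^ d < r * ‖u‖ ^ (d + 1)) (h : (psi d r t u).im = 0) : u.im = 0 := by
  by_contra him
  have hu0 : u ≠ 0 := by rintro rfl; exact him rfl
  have hnormSq : normSq (u ^ d) = ‖u‖ ^ (2 * d) := by
    rw [normSq_eq_norm_sq, norm_pow, ← pow_mul, mul_comm]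
  have hbalance : r * u.im * ‖u‖ ^ (2 * d) = t * r ^ d * (u ^ d).im := by
    rw [psi, div_eq_mul_inv, ← ofReal_pow, ← ofReal_mul] at h
    simp only [add_im, im_ofReal_mul, inv_im, hnormSq] at h
    field_simp at h
    linarith
  have hbound : r * ‖u‖ ^ (d + 1) * (‖u‖ ^ d * |u.im|) ≤ d * t * r ^ d * (‖u‖ ^ d * |u.im|) :=
    calc r * ‖u‖ ^ (d + 1) * (‖u‖ ^ d * |u.im|) = |r * u.im * ‖u‖ ^ (2 * d)| * ‖u‖ := by
          rw [abs_mul, abs_mul, abs_of_pos hr, abs_of_nonneg (pow_nonneg (norm_nonneg u) _)]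
          ring
      _ = t * r ^ d * (|(u ^ d).im| * ‖u‖) := by
          rw [hbalance, abs_mul, abs_of_nonneg (by positivity)]; ring
      _ ≤ t * r ^ d * (d * ‖u‖ ^ d * |u.im|) :=
          mul_le_mul_of_nonneg_left (abs_im_pow_mul_norm_le u d) (by positivity)
      _ = d * t * r ^ d * (‖u‖ ^ d * |u.im|) := by ring
  have hpos : 0 < ‖u‖ ^ d * |u.im| := by positivity
  exact (le_of_mul_le_mul_right hbound hpos).not_gt hu

theorem real_psi_neg (hd : 0 < d) (hr : 0 < r) (ht : 0 ≤ t) {a : ℝ} (ha : a < 0)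
    (h : d * t * r ^ d < r * |a| ^ (d + 1)) : r * a + t * r ^ d / a ^ d < 0 := by
  have hcoef : 0 ≤ t * r ^ d := by positivity
  have habs : t * r ^ d / a ^ d ≤ t * r ^ d / |a| ^ d := by
    simpa only [abs_div, abs_pow, abs_of_nonneg hcoef] using le_abs_self (t * r ^ d / a ^ d)
  have hsmall : t * r ^ d / |a| ^ d < r * |a| := by
    rw [div_lt_iff₀ (pow_pos (abs_pos.mpr ha.ne) d)]
    calc t * r ^ d ≤ d * t * r ^ d := by
          rw [mul_assoc]; exact le_mul_of_one_le_left hcoef (by exact_mod_cast hd)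
      _ < r * |a| ^ (d + 1) := h
      _ = r * |a| * |a| ^ d := by ring
  have hra : r * a = -(r * |a|) := by rw [abs_of_neg ha]; ring
  linarith

theorem lt_real_psi_pow (hd : 0 < d) (hr : 0 < r) (ht : 0 ≤ t) {a : ℝ} (ha : 0 < a)
    (h : r * a ^ (d + 1) ≠ d * t * r ^ d) :
    ((d : ℝ) + 1) ^ (d + 1) * t * r ^ (2 * d) / d ^ d < (r * a + t * r ^ d / a ^ d) ^ (d + 1) := by
  have hd' : (d : ℝ) ≠ 0 := by exact_mod_cast hd.ne'
  have hne : r * a / d ≠ t * r ^ d / a ^ d := by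
    contrapose! h
    field_simp at h
    linear_combination h
  convert pow_mul_lt_add_pow hd (by positivity) (by positivity) hne using 2
  · rw [div_pow]
    field_simp
    ring
  · field_simp

theorem mul_rho_pow_succ (hd : 0 < d) (hr : 0 ≤ r) (ht : 0 ≤ t) :
    r * rho d r t ^ (d + 1) = d * t * r ^ d := by
  rw [rho, ← Real.rpow_natCast, ← Real.rpow_mul (by positivity)]
  rw [show (1 : ℝ) / (d + 1) * ((d + 1 : ℕ) : ℝ) = 1 by push_cast; field_simp, Real.rpow_one]
  obtain ⟨k, rfl⟩ := Nat.exists_eq_add_of_lt hd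
  simp only [zero_add, Nat.add_sub_cancel]
  ring

theorem xstar_pow_succ (hr : 0 ≤ r) (ht : 0 ≤ t) :
    xstar d r t ^ (d + 1) = ((d : ℝ) + 1) ^ (d + 1) * t * r ^ (2 * d) / d ^ d := by
  have hd : (0 : ℝ) ≤ d := d.cast_nonneg
  have hrpow {x e : ℝ} (hx : 0 ≤ x) : (x ^ (e / (d + 1))) ^ (d + 1) = x ^ e := by
    rw [← Real.rpow_natCast, ← Real.rpow_mul hx]
    push_cast
    field_simp
  rw [xstar, mul_pow, mul_pow, mul_pow, hrpow hd, hrpow ht, hrpow hr, Real.rpow_neg hd,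
    Real.rpow_natCast, Real.rpow_one, show (2 : ℝ) * d = ((2 * d : ℕ) : ℝ) by push_cast; ring,
    Real.rpow_natCast]
  ring

theorem xstar_pow_lt_of_psi_eq_ofReal (hd : 0 < d) (hr : 0 < r) (ht : 0 ≤ t) {u : ℂ}
    (hu : d * t * r ^ d < r * ‖u‖ ^ (d + 1)) {x : ℝ} (hx : 0 ≤ x) (h : psi d r t u = x) :
    xstar d r t ^ (d + 1) < x ^ (d + 1) := by
  have hu_real : u = (u.re : ℂ) :=
    ext rfl (im_eq_zero_of_im_psi_eq_zero hr ht hu (by rw [h, ofReal_im]))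
  set a := u.re
  rw [hu_real, psi_ofReal, ofReal_inj] at h
  rw [hu_real, norm_real, Real.norm_eq_abs] at hu
  rcases lt_trichotomy a 0 with ha | ha | ha
  · linarith [real_psi_neg hd hr ht ha hu]
  · rw [ha, abs_zero, zero_pow d.succ_ne_zero, mul_zero] at hu
    exact (hu.not_ge (by positivity)).elim
  · rw [xstar_pow_succ hr.le ht, ← h]
    rw [abs_of_pos ha] at hu
    exact lt_real_psi_pow hd hr ht ha hu.ne'

end

theorem stmt5_general (d : ℕ) (hd : 2 ≤ d) (t r : ℝ) (ht : 0 < t) (hr0 : 0 < r)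
    (w : ℂ) (hw : rho d r t < ‖w‖)
    (s : ℝ) (hs0 : 0 ≤ s) (hs1 : s ≤ xstar d r t ^ (d + 1)) :
    psi d r t w ^ (d + 1) ≠ (s : ℂ) := by
  have hd0 : 0 < d := by omega
  have hw' : d * t * r ^ d < r * ‖w‖ ^ (d + 1) := by
    rw [← mul_rho_pow_succ hd0 hr0.le ht.le]
    gcongr
    exact Real.rpow_nonneg (by positivity) _
  intro h
  obtain ⟨ζ, hζ, hψ⟩ := exists_pow_eq_one_of_pow_eq_ofReal hs0 h
  have hζ_norm : ‖ζ‖ = 1 := norm_eq_one_of_pow_eq_one hζ d.succ_ne_zero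
  have hζ0 : ζ ≠ 0 := norm_ne_zero_iff.mp (by rw [hζ_norm]; exact one_ne_zero)
  have hrot : psi d r t (ζ⁻¹ * w) = ‖psi d r t w‖ := by
    rw [psi_mul_of_pow_eq_one (by rw [inv_pow, hζ, inv_one]), inv_mul_eq_iff_eq_mul₀ hζ0]
    exact hψ
  have hrot_norm : ‖ζ⁻¹ * w‖ = ‖w‖ := by rw [norm_mul, norm_inv, hζ_norm, inv_one, one_mul]
  have hlt := xstar_pow_lt_of_psi_eq_ofReal hd0 hr0 ht.le (hrot_norm ▸ hw') (norm_nonneg _) hrot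
  have hs : ‖psi d r t w‖ ^ (d + 1) = s := by
    rw [← norm_pow, h, norm_real, Real.norm_of_nonneg hs0]
  linarith

/-- For `|w| > ρ` in the subcritical regime, `ψ(w)` does not lie on the `(d+1)`-star
`Σ₁* = {z : z^{d+1} ∈ [0, (x*)^{d+1}]}`: that is, `ψ(w)^{d+1}` is not a real number in
the interval `[0, (x*)^{d+1}]`. -/
theorem stmt5 (d : ℕ) (hd : 2 ≤ d) (t r : ℝ) (ht : 0 < t) (hr0 : 0 < r)
    (hrcrit : r < ((d : ℝ) * t) ^ (-1 / ((d : ℝ) - 1)))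
    (w : ℂ) (hw : rho d r t < ‖w‖)
    (s : ℝ) (hs0 : 0 ≤ s) (hs1 : s ≤ xstar d r t ^ (d + 1)) :
    psi d r t w ^ (d + 1) ≠ (s : ℂ) :=
  stmt5_general d hd t r ht hr0 w hw s hs0 hs1
end
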